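/- Let m : [0,1] → ℝ^d and Σ : [0,1] → ℝ^{d×d} be differentiable with Σ(t) symmetric positive definite for every t, let F : [0,1] → ℝ^{d×d} and g : [0,1] → ℝ^d be continuous, let a ∈ ℝ^{d×d} be symmetric positive semi-definite and ε > 0, and let ρ(t,x) = (2π)^{−d/2} (det Σ(t))^{−1/2} exp(−½ (x − m(t))ᵀ Σ(t)⁻¹ (x − m(t))) be the Gaussian density with mean m(t) and covariance Σ(t). Then ρ satisfies the Fokker–Planck equation ∂_t ρ(t,x) + ∇_x · (ρ(t,x)(F(t)x + g(t))) − (ε/2) Σ_{i,k=1}^{d} a_{ik} ∂²ρ/∂x_i∂x_k (t,x) = 0 at every (t,x) ∈ [0,1] × ℝ^d if and only if ṁ(t) = F(t) m(t) + g(t) and Σ̇(t) = F(t) Σ(t) + Σ(t) F(t)ᵀ + ε a for every t ∈ [0,1]. -/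

import Mathlib

/-!
Along the Gaussian family every term of the Fokker–Planck operator is `ρ` times a polynomial of
degree two in `w = Σ⁻¹ (x - m)`: Jacobi's formula `(det Σ)˙ = det Σ · tr (Σ⁻¹ Σ̇)` and
`(Σ⁻¹)˙ = -Σ⁻¹ Σ̇ Σ⁻¹` give the time derivative, and the spatial derivatives are
`∂ᵢρ = -ρ wᵢ`, `∂ᵢ∂ₖρ = ρ (wᵢ wₖ - (Σ⁻¹)ₖᵢ)`. Writing `R = Σ̇ - FΣ - ΣFᵀ - εa`, the operator equals
`ρ · (w · (ṁ - F m - g) + (w · R w - tr (Σ⁻¹ R)) / 2)`. As `ρ > 0` and `w` ranges over all of `ℝ^d`,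
it vanishes identically iff the linear coefficient and the symmetric matrix `R` vanish, which are
exactly the two moment equations.
-/

open Matrix

noncomputable section

namespace Stmt8

/-- Partial derivative in the `i`-th coordinate of a function on `ℝ^d`. -/
def pd {d : ℕ} (i : Fin d) (f : (Fin d → ℝ) → ℝ) (x : Fin d → ℝ) : ℝ :=
  deriv (fun s => f (Function.update x i s)) (x i)

/-- The Gaussian density with mean `m` and covariance `S`:
`ρ(x) = (2π)^{-d/2} (det S)^{-1/2} exp(-½ (x-m)ᵀ S⁻¹ (x-m))`. -/
def gaussDens {d : ℕ} (m : Fin d → ℝ) (S : Matrix (Fin d) (Fin d) ℝ) (x : Fin d → ℝ) : ℝ :=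
  (2 * Real.pi) ^ (-(d : ℝ) / 2) * S.det ^ (-(1 : ℝ) / 2) *
    Real.exp (-(1 / 2) * ((x - m) ⬝ᵥ (S⁻¹ *ᵥ (x - m))))

section Calculus

variable {ι κ : Type*} [Fintype ι] {t : ℝ}

theorem _root_.HasDerivAt.dotProduct {u v : ℝ → ι → ℝ} {u' v' : ι → ℝ}
    (hu : HasDerivAt u u' t) (hv : HasDerivAt v v' t) :
    HasDerivAt (fun s => u s ⬝ᵥ v s) (u' ⬝ᵥ v t + u t ⬝ᵥ v') t := by
  have h := HasDerivAt.fun_sum fun i (_ : i ∈ Finset.univ) =>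
    (hasDerivAt_pi.1 hu i).mul (hasDerivAt_pi.1 hv i)
  rw [Finset.sum_add_distrib] at h
  exact h

theorem hasDerivAt_mulVec {M : ℝ → Matrix κ ι ℝ} {M' : Matrix κ ι ℝ} {u : ℝ → ι → ℝ}
    {u' : ι → ℝ} (hM : ∀ i j, HasDerivAt (fun s => M s i j) (M' i j) t)
    (hu : HasDerivAt u u' t) :
    HasDerivAt (fun s => M s *ᵥ u s) (M' *ᵥ u t + M t *ᵥ u') t :=
  hasDerivAt_pi.2 fun i => (hasDerivAt_pi.2 (hM i)).dotProduct hu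

theorem _root_.HasDerivAt.const_mulVec (M : Matrix κ ι ℝ) {u : ℝ → ι → ℝ} {u' : ι → ℝ}
    (hu : HasDerivAt u u' t) : HasDerivAt (fun s => M *ᵥ u s) (M *ᵥ u') t := by
  have h := hasDerivAt_mulVec (M' := 0) (fun i j => hasDerivAt_const t (M i j)) hu
  rwa [zero_mulVec, zero_add] at h

theorem hasDerivAt_mul_apply [Fintype κ] {A : ℝ → Matrix κ ι ℝ} {B : ℝ → Matrix ι κ ℝ}
    {A' : Matrix κ ι ℝ} {B' : Matrix ι κ ℝ}
    (hA : ∀ i j, HasDerivAt (fun s => A s i j) (A' i j) t)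
    (hB : ∀ i j, HasDerivAt (fun s => B s i j) (B' i j) t) (i j : κ) :
    HasDerivAt (fun s => (A s * B s) i j) ((A' * B t + A t * B') i j) t := by
  simpa only [mul_apply', Matrix.add_apply] using
    (hasDerivAt_pi.2 (hA i)).dotProduct (hasDerivAt_pi.2 fun k => hB k j)

variable [DecidableEq ι] {N : ℝ → Matrix ι ι ℝ} {N' : Matrix ι ι ℝ}

theorem hasDerivAt_det (hN : ∀ i j, HasDerivAt (fun s => N s i j) (N' i j) t) :
    HasDerivAt (fun s => (N s).det) (∑ i, ((N t).updateRow i (N' i)).det) t := by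
  let D : ContinuousMultilinearMap ℝ (fun _ : ι => ι → ℝ) ℝ :=
    ⟨detRowAlternating.toMultilinearMap, continuous_id.matrix_det⟩
  have hD : D.linearDeriv (fun i => N t i) (fun i => N' i) = ∑ i, ((N t).updateRow i (N' i)).det :=
    D.linearDeriv_apply _ _
  exact hD ▸ (D.hasFDerivAt _).comp_hasDerivAt t
    (hasDerivAt_pi.2 fun i => hasDerivAt_pi.2 (hN i))

theorem sum_det_updateRow_eq_det_mul_trace {S : Matrix ι ι ℝ} (S' : Matrix ι ι ℝ)
    (hS : IsUnit S.det) :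
    ∑ i, (S.updateRow i (S' i)).det = S.det * (S⁻¹ * S').trace := by
  have hrow : ∀ i, S' i = ∑ k, (S' * S⁻¹) i k • S k := by
    intro i
    ext j
    simp [← mul_apply, Matrix.mul_assoc, nonsing_inv_mul S hS]
  simp_rw [hrow, det_updateRow_sum, trace_mul_comm S⁻¹, trace, Finset.mul_sum]
  simp [mul_comm]

theorem hasDerivAt_det_of_isUnit (hN : ∀ i j, HasDerivAt (fun s => N s i j) (N' i j) t)
    (hdet : IsUnit (N t).det) :
    HasDerivAt (fun s => (N s).det) ((N t).det * ((N t)⁻¹ * N').trace) t :=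
  sum_det_updateRow_eq_det_mul_trace N' hdet ▸ hasDerivAt_det hN

theorem hasDerivAt_inv_apply (hN : ∀ i j, HasDerivAt (fun s => N s i j) (N' i j) t)
    (hdet : IsUnit (N t).det) (i j : ι) :
    HasDerivAt (fun s => (N s)⁻¹ i j) ((-((N t)⁻¹ * N' * (N t)⁻¹)) i j) t := by
  -- The adjugate formula gives differentiability; the value comes from differentiating
  -- `(N s)⁻¹ * N s = 1`, which holds near `t` because `det ∘ N` is continuous.
  have hdiff : ∀ k l, DifferentiableAt ℝ (fun s => (N s)⁻¹ k l) t := by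
    intro k l
    have hrow : ∀ p q, HasDerivAt (fun s => (N s).updateRow l (Pi.single k 1) p q)
        (N'.updateRow l 0 p q) t := by
      intro p q
      rcases eq_or_ne p l with rfl | hp
      · simpa using hasDerivAt_const t (Pi.single (M := fun _ => ℝ) k 1 q)
      · simpa [updateRow_ne hp] using hN p q
    simp_rw [inv_def, Ring.inverse_eq_inv', Matrix.smul_apply, adjugate_apply, smul_eq_mul]
    exact ((hasDerivAt_det hN).differentiableAt.inv hdet.ne_zero).mul
      (hasDerivAt_det hrow).differentiableAt
  let P' : Matrix ι ι ℝ := fun k l => deriv (fun s => (N s)⁻¹ k l) t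
  have hP' : ∀ k l, HasDerivAt (fun s => (N s)⁻¹ k l) (P' k l) t :=
    fun k l => (hdiff k l).hasDerivAt
  have hinv : ∀ᶠ s in nhds t, (N s)⁻¹ * N s = 1 :=
    ((hasDerivAt_det hN).continuousAt.eventually_ne hdet.ne_zero).mono fun s hs =>
      nonsing_inv_mul _ (isUnit_iff_ne_zero.2 hs)
  have hzero : P' * N t + (N t)⁻¹ * N' = 0 := by
    ext k l
    exact (hasDerivAt_mul_apply hP' hN k l).unique
      ((hasDerivAt_const t ((1 : Matrix ι ι ℝ) k l)).congr_of_eventuallyEq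
        (hinv.mono fun s hs => congrFun (congrFun hs k) l))
  have hP'_eq : P' = -((N t)⁻¹ * N' * (N t)⁻¹) :=
    calc P' = P' * N t * (N t)⁻¹ := by
          rw [Matrix.mul_assoc, mul_nonsing_inv _ hdet, Matrix.mul_one]
      _ = _ := by rw [eq_neg_of_add_eq_zero_left hzero, Matrix.neg_mul]
  exact hP'_eq ▸ hP' i j

end Calculus

theorem isSymm_of_hasDerivAt {ι : Type*} {S : ℝ → Matrix ι ι ℝ} {S' : Matrix ι ι ℝ} {A : Set ℝ}
    {t : ℝ} (hA : UniqueDiffWithinAt ℝ A t) (ht : t ∈ A)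
    (hS : ∀ i j, HasDerivAt (fun s => S s i j) (S' i j) t) (hsymm : ∀ s ∈ A, (S s).IsSymm) :
    S'.IsSymm :=
  IsSymm.ext fun i j => hA.eq_deriv _ (hS j i).hasDerivWithinAt
    ((hS i j).hasDerivWithinAt.congr (fun s hs => (hsymm s hs).apply i j) ((hsymm t ht).apply i j))

section Symmetric

variable {ι : Type*} [Fintype ι] {P : Matrix ι ι ℝ}

theorem _root_.Matrix.IsSymm.dotProduct_mulVec (hP : P.IsSymm) (u v : ι → ℝ) :
    u ⬝ᵥ (P *ᵥ v) = (P *ᵥ u) ⬝ᵥ v := by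
  rw [Matrix.dotProduct_mulVec, ← mulVec_transpose, hP.eq]

theorem _root_.HasDerivAt.dotProduct_mulVec_self {c : ℝ → ι → ℝ} {c' : ι → ℝ} {t : ℝ}
    (hP : P.IsSymm) (hc : HasDerivAt c c' t) :
    HasDerivAt (fun s => c s ⬝ᵥ (P *ᵥ c s)) (2 * (c' ⬝ᵥ (P *ᵥ c t))) t := by
  convert hc.dotProduct (hc.const_mulVec P) using 1
  rw [hP.dotProduct_mulVec (c t), dotProduct_comm (P *ᵥ c t)]
  ring

end Symmetric

section Gaussian

variable {d : ℕ} {m : Fin d → ℝ} {S : Matrix (Fin d) (Fin d) ℝ}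

theorem hasDerivAt_gaussDens_update (hS : S.IsSymm) (x : Fin d → ℝ) (i : Fin d) :
    HasDerivAt (fun s => gaussDens m S (Function.update x i s))
      (-(gaussDens m S x * (S⁻¹ *ᵥ (x - m)) i)) (x i) := by
  have hq := ((hasDerivAt_update x i (x i)).sub_const m).dotProduct_mulVec_self hS.inv
  rw [Function.update_eq_self] at hq
  refine (((hq.const_mul (-(1 / 2))).exp).const_mul
    ((2 * Real.pi) ^ (-(d : ℝ) / 2) * S.det ^ (-(1 : ℝ) / 2))).congr_deriv ?_
  simp only [gaussDens, single_dotProduct, Function.update_eq_self]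
  ring

theorem pd_gaussDens (hS : S.IsSymm) (i : Fin d) :
    pd i (gaussDens m S) = fun x => -(gaussDens m S x * (S⁻¹ *ᵥ (x - m)) i) :=
  funext fun x => (hasDerivAt_gaussDens_update hS x i).deriv

theorem pd_pd_gaussDens (hS : S.IsSymm) (x : Fin d → ℝ) (i k : Fin d) :
    pd i (fun y => pd k (fun z => gaussDens m S z) y) x =
      gaussDens m S x * ((S⁻¹ *ᵥ (x - m)) i * (S⁻¹ *ᵥ (x - m)) k - S⁻¹ k i) := by
  have hlin := hasDerivAt_pi.1
    (((hasDerivAt_update x i (x i)).sub_const m).const_mulVec S⁻¹) k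
  rw [pd_gaussDens hS k]
  refine (((hasDerivAt_gaussDens_update hS x i).fun_mul hlin).fun_neg).deriv.trans ?_
  simp only [mulVec_single_one, col_apply, Function.update_eq_self]
  ring

theorem pd_gaussDens_mul_affine (hS : S.IsSymm) (F : Matrix (Fin d) (Fin d) ℝ) (g : Fin d → ℝ)
    (x : Fin d → ℝ) (i : Fin d) :
    pd i (fun y => gaussDens m S y * (F *ᵥ y + g) i) x =
      gaussDens m S x * (F i i - (S⁻¹ *ᵥ (x - m)) i * (F *ᵥ x + g) i) := by
  have haff := hasDerivAt_pi.1
    (((hasDerivAt_update x i (x i)).const_mulVec F).add_const g) i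
  refine ((hasDerivAt_gaussDens_update hS x i).fun_mul haff).deriv.trans ?_
  simp only [mulVec_single_one, col_apply, Function.update_eq_self]
  ring

theorem hasDerivAt_gaussDens_time {m : ℝ → Fin d → ℝ} {m' : Fin d → ℝ}
    {S : ℝ → Matrix (Fin d) (Fin d) ℝ} {S' : Matrix (Fin d) (Fin d) ℝ} {t : ℝ}
    (hm : HasDerivAt m m' t) (hS : ∀ i j, HasDerivAt (fun s => S s i j) (S' i j) t)
    (hsymm : (S t).IsSymm) (hdet : IsUnit (S t).det) (x : Fin d → ℝ) :
    HasDerivAt (fun s => gaussDens (m s) (S s) x)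
      (gaussDens (m t) (S t) x * (((S t)⁻¹ *ᵥ (x - m t)) ⬝ᵥ m' +
        (((S t)⁻¹ *ᵥ (x - m t)) ⬝ᵥ (S' *ᵥ ((S t)⁻¹ *ᵥ (x - m t))) - ((S t)⁻¹ * S').trace) / 2)) t := by
  have hu : HasDerivAt (fun s => x - m s) (-m') t := hm.const_sub x
  have hq := hu.dotProduct (hasDerivAt_mulVec (hasDerivAt_inv_apply hS hdet) hu)
  have hD := (hasDerivAt_det_of_isUnit hS hdet).rpow_const (p := -(1 : ℝ) / 2)
    (Or.inl hdet.ne_zero)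
  refine ((hD.const_mul ((2 * Real.pi) ^ (-(d : ℝ) / 2))).fun_mul
    (hq.const_mul (-(1 / 2))).exp).congr_deriv ?_
  simp only [gaussDens]
  set P := (S t)⁻¹
  have hlin : -m' ⬝ᵥ (P *ᵥ (x - m t)) = -((P *ᵥ (x - m t)) ⬝ᵥ m') := by
    rw [neg_dotProduct, dotProduct_comm]
  have hquad : (x - m t) ⬝ᵥ (-(P * S' * P) *ᵥ (x - m t) + P *ᵥ -m') =
      -((P *ᵥ (x - m t)) ⬝ᵥ (S' *ᵥ (P *ᵥ (x - m t)))) - (P *ᵥ (x - m t)) ⬝ᵥ m' := by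
    rw [neg_mulVec, ← mulVec_mulVec, ← mulVec_mulVec, dotProduct_add, dotProduct_neg,
      hsymm.inv.dotProduct_mulVec, hsymm.inv.dotProduct_mulVec, dotProduct_neg]
    ring
  have hne := hdet.ne_zero
  rw [hlin, hquad, Real.rpow_sub_one hne]
  field_simp
  ring

end Gaussian

def fokkerPlanck {d : ℕ} (ε : ℝ) (a F : Matrix (Fin d) (Fin d) ℝ) (g : Fin d → ℝ)
    (ρ : ℝ → (Fin d → ℝ) → ℝ) (t : ℝ) (x : Fin d → ℝ) : ℝ :=
  deriv (fun s => ρ s x) t + ∑ i, pd i (fun y => ρ t y * (F *ᵥ y + g) i) x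
    - (ε / 2) * ∑ i, ∑ k, a i k * pd i (fun y => pd k (fun z => ρ t z) y) x

theorem fokkerPlanck_gaussDens {d : ℕ} {ε : ℝ} {a F : Matrix (Fin d) (Fin d) ℝ} {g : Fin d → ℝ}
    {m : ℝ → Fin d → ℝ} {m' : Fin d → ℝ}
    {S : ℝ → Matrix (Fin d) (Fin d) ℝ} {S' : Matrix (Fin d) (Fin d) ℝ} {t : ℝ}
    (hm : HasDerivAt m m' t) (hS : ∀ i j, HasDerivAt (fun s => S s i j) (S' i j) t)
    (hsymm : (S t).IsSymm) (hdet : IsUnit (S t).det) (x : Fin d → ℝ) :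
    fokkerPlanck ε a F g (fun s => gaussDens (m s) (S s)) t x =
      gaussDens (m t) (S t) x *
        (((S t)⁻¹ *ᵥ (x - m t)) ⬝ᵥ (m' - (F *ᵥ m t + g)) +
          (((S t)⁻¹ *ᵥ (x - m t)) ⬝ᵥ ((S' - (F * S t + S t * Fᵀ + ε • a)) *ᵥ ((S t)⁻¹ *ᵥ (x - m t)))
            - ((S t)⁻¹ * (S' - (F * S t + S t * Fᵀ + ε • a))).trace) / 2) := by
  unfold fokkerPlanck
  simp only [(hasDerivAt_gaussDens_time hm hS hsymm hdet x).deriv,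
    pd_gaussDens_mul_affine hsymm, pd_pd_gaussDens hsymm]
  have hSP : S t * (S t)⁻¹ = 1 := mul_nonsing_inv _ hdet
  have hPS : (S t)⁻¹ * S t = 1 := nonsing_inv_mul _ hdet
  set P := (S t)⁻¹
  set w := P *ᵥ (x - m t)
  set ρ := gaussDens (m t) (S t) x
  have hx : F *ᵥ x = F *ᵥ m t + (F * S t) *ᵥ w := by
    rw [mulVec_mulVec, Matrix.mul_assoc, hSP, Matrix.mul_one, ← mulVec_add, add_sub_cancel]
  have hdiv : ∑ i, ρ * (F i i - w i * (F *ᵥ x + g) i) = ρ * (F.trace - w ⬝ᵥ (F *ᵥ x + g)) := by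
    simp only [mul_sub, Finset.sum_sub_distrib, ← Finset.mul_sum, trace, diag, dotProduct]
  have hdiff : ∑ i, ∑ k, a i k * (ρ * (w i * w k - P k i)) =
      ρ * (w ⬝ᵥ (a *ᵥ w) - (a * P).trace) := by
    simp only [dotProduct, mulVec, trace, diag, mul_apply, Finset.mul_sum, ← Finset.sum_sub_distrib]
    refine Finset.sum_congr rfl fun i _ => Finset.sum_congr rfl fun k _ => ?_
    ring
  have hquad : w ⬝ᵥ ((S t * Fᵀ) *ᵥ w) = w ⬝ᵥ ((F * S t) *ᵥ w) := by
    rw [← mulVec_mulVec, hsymm.dotProduct_mulVec, ← mulVec_mulVec, Matrix.dotProduct_mulVec w F,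
      ← mulVec_transpose, dotProduct_comm]
  have htr : (P * (S t * Fᵀ)).trace = F.trace := by
    rw [← Matrix.mul_assoc, hPS, Matrix.one_mul, trace_transpose]
  have htr' : (P * (F * S t)).trace = F.trace := by
    rw [← Matrix.mul_assoc, trace_mul_cycle, hSP, Matrix.one_mul]
  rw [hdiv, hdiff, hx]
  simp only [sub_mulVec, add_mulVec, smul_mulVec, dotProduct_sub, dotProduct_add, dotProduct_smul,
    mul_sub, mul_add, Matrix.mul_smul, trace_sub, trace_add, trace_smul, htr, htr', hquad,
    trace_mul_comm P a, smul_eq_mul]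
  ring

theorem gaussDens_pos {d : ℕ} {m : Fin d → ℝ} {S : Matrix (Fin d) (Fin d) ℝ} (hS : 0 < S.det)
    (x : Fin d → ℝ) : 0 < gaussDens m S x := by
  unfold gaussDens
  positivity

theorem eq_zero_of_forall_dotProduct_add_quadratic_eq {ι : Type*} [Fintype ι] [DecidableEq ι]
    {r : ι → ℝ} {Q : Matrix ι ι ℝ} {c : ℝ} (hQ : Q.IsSymm)
    (h : ∀ w, w ⬝ᵥ r + w ⬝ᵥ (Q *ᵥ w) = c) : r = 0 ∧ Q = 0 := by
  have hc : c = 0 := by simpa using (h 0).symm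
  have hr : ∀ w, w ⬝ᵥ r = 0 := fun w => by
    have h' := h (-w)
    simp only [neg_dotProduct, mulVec_neg, dotProduct_neg, neg_neg] at h'
    linarith [h w]
  have hQw : ∀ w, w ⬝ᵥ (Q *ᵥ w) = 0 := fun w => by linarith [h w, hr w]
  have hbil : ∀ v w, v ⬝ᵥ (Q *ᵥ w) = 0 := fun v w => by
    have h' := hQw (v + w)
    rw [mulVec_add, dotProduct_add, add_dotProduct, add_dotProduct, hQw v, hQw w,
      hQ.dotProduct_mulVec w v, dotProduct_comm (Q *ᵥ w)] at h'
    linarith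
  refine ⟨funext fun i => ?_, ext fun i j => ?_⟩
  · simpa using hr (Pi.single i 1)
  · simpa using hbil (Pi.single i 1) (Pi.single j 1)

theorem fokkerPlanck_gaussDens_eq_zero_iff {d : ℕ} {ε : ℝ} {a F : Matrix (Fin d) (Fin d) ℝ}
    {g : Fin d → ℝ} {m : ℝ → Fin d → ℝ} {m' : Fin d → ℝ}
    {S : ℝ → Matrix (Fin d) (Fin d) ℝ} {S' : Matrix (Fin d) (Fin d) ℝ} {t : ℝ}
    (hm : HasDerivAt m m' t) (hS : ∀ i j, HasDerivAt (fun s => S s i j) (S' i j) t)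
    (hpos : (S t).PosDef) (hS' : S'.IsSymm) (ha : a.IsSymm) :
    (∀ x, fokkerPlanck ε a F g (fun s => gaussDens (m s) (S s)) t x = 0) ↔
      m' = F *ᵥ m t + g ∧ S' = F * S t + S t * Fᵀ + ε • a := by
  have hsymm : (S t).IsSymm := isHermitian_iff_isSymm.1 hpos.isHermitian
  have hdet : IsUnit (S t).det := hpos.det_pos.ne'.isUnit
  simp only [fokkerPlanck_gaussDens hm hS hsymm hdet, mul_eq_zero,
    (gaussDens_pos hpos.det_pos _).ne', false_or]
  set R := S' - (F * S t + S t * Fᵀ + ε • a)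
  constructor
  · intro h
    have hFS : (F * S t + S t * Fᵀ).IsSymm := by
      simpa only [transpose_mul, hsymm.eq] using isSymm_add_transpose_self (F * S t)
    have hRsymm : ((1 / 2 : ℝ) • R).IsSymm := (hS'.sub (hFS.add (ha.smul ε))).smul _
    obtain ⟨hr, hR⟩ := eq_zero_of_forall_dotProduct_add_quadratic_eq
      (r := m' - (F *ᵥ m t + g)) (c := ((S t)⁻¹ * R).trace / 2) hRsymm fun w => by
      have h' := h (m t + S t *ᵥ w)
      rw [add_sub_cancel_left, mulVec_mulVec, nonsing_inv_mul _ hdet, one_mulVec] at h'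
      simp only [smul_mulVec, dotProduct_smul, smul_eq_mul]
      linarith
    exact ⟨sub_eq_zero.1 hr, sub_eq_zero.1 (by simpa using hR)⟩
  · rintro ⟨hmean, hcov⟩ x
    simp [R, hmean, hcov]

theorem statement_8_general {d : ℕ} (ε : ℝ)
    (a : Matrix (Fin d) (Fin d) ℝ) (ha : a.PosSemidef)
    (m m' : ℝ → (Fin d → ℝ)) (Sm Sm' : ℝ → Matrix (Fin d) (Fin d) ℝ)
    (F : ℝ → Matrix (Fin d) (Fin d) ℝ) (g : ℝ → (Fin d → ℝ))
    (hm : ∀ t ∈ Set.Icc (0 : ℝ) 1, ∀ i, HasDerivAt (fun s => m s i) (m' t i) t)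
    (hSm : ∀ t ∈ Set.Icc (0 : ℝ) 1, ∀ i j, HasDerivAt (fun s => Sm s i j) (Sm' t i j) t)
    (hpos : ∀ t ∈ Set.Icc (0 : ℝ) 1, (Sm t).PosDef) :
    (∀ t ∈ Set.Icc (0 : ℝ) 1, ∀ x : Fin d → ℝ,
      deriv (fun s => gaussDens (m s) (Sm s) x) t
        + (∑ i, pd i (fun y => gaussDens (m t) (Sm t) y * (F t *ᵥ y + g t) i) x)
        - (ε / 2) * ∑ i, ∑ k, a i k *
            pd i (fun y => pd k (fun z => gaussDens (m t) (Sm t) z) y) x = 0)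
    ↔ (∀ t ∈ Set.Icc (0 : ℝ) 1,
        m' t = F t *ᵥ m t + g t ∧ Sm' t = F t * Sm t + Sm t * (F t)ᵀ + ε • a) := by
  have hsymm : ∀ t ∈ Set.Icc (0 : ℝ) 1, (Sm t).IsSymm := fun t ht =>
    isHermitian_iff_isSymm.1 (hpos t ht).isHermitian
  refine forall₂_congr fun t ht => fokkerPlanck_gaussDens_eq_zero_iff (hasDerivAt_pi.2 (hm t ht))
    (hSm t ht) (hpos t ht) ?_ (isHermitian_iff_isSymm.1 ha.isHermitian)
  exact isSymm_of_hasDerivAt (uniqueDiffOn_Icc one_pos t ht) ht (hSm t ht) hsymm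

/-- The Gaussian density `ρ(t,x)` with mean `m(t)` and covariance
`Σ(t)` satisfies the Fokker–Planck equation
`∂_t ρ + ∇_x·(ρ (F(t)x + g(t))) - (ε/2) Σ_{i,k} a_{ik} ∂²ρ/∂x_i∂x_k = 0`
at every `(t,x) ∈ [0,1] × ℝ^d` if and only if `ṁ = F m + g` and
`Σ̇ = F Σ + Σ Fᵀ + ε a` on `[0,1]`. -/
theorem statement_8 {d : ℕ} (ε : ℝ) (hε : 0 < ε)
    (a : Matrix (Fin d) (Fin d) ℝ) (ha : a.PosSemidef)
    (m m' : ℝ → (Fin d → ℝ)) (Sm Sm' : ℝ → Matrix (Fin d) (Fin d) ℝ)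
    (F : ℝ → Matrix (Fin d) (Fin d) ℝ) (g : ℝ → (Fin d → ℝ))
    (hm : ∀ t ∈ Set.Icc (0 : ℝ) 1, ∀ i, HasDerivAt (fun s => m s i) (m' t i) t)
    (hSm : ∀ t ∈ Set.Icc (0 : ℝ) 1, ∀ i j, HasDerivAt (fun s => Sm s i j) (Sm' t i j) t)
    (hpos : ∀ t ∈ Set.Icc (0 : ℝ) 1, (Sm t).PosDef)
    (hF : ∀ i j, ContinuousOn (fun t => F t i j) (Set.Icc (0 : ℝ) 1))
    (hg : ∀ i, ContinuousOn (fun t => g t i) (Set.Icc (0 : ℝ) 1)) :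
    (∀ t ∈ Set.Icc (0 : ℝ) 1, ∀ x : Fin d → ℝ,
      deriv (fun s => gaussDens (m s) (Sm s) x) t
        + (∑ i, pd i (fun y => gaussDens (m t) (Sm t) y * (F t *ᵥ y + g t) i) x)
        - (ε / 2) * ∑ i, ∑ k, a i k *
            pd i (fun y => pd k (fun z => gaussDens (m t) (Sm t) z) y) x = 0)
    ↔ (∀ t ∈ Set.Icc (0 : ℝ) 1,
        m' t = F t *ᵥ m t + g t ∧ Sm' t = F t * Sm t + Sm t * (F t)ᵀ + ε • a) :=
  statement_8_general ε a ha m m' Sm Sm' F g hm hSm hpos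

end Stmt8
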